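/- Let g be a smooth metric field on open U ⊆ ℝ^n with metric Hodge operator ⋆_g X = √|det g| g_∧⁻¹(X̃) τ. Then for every smooth multivector field X: ⋆_g⁻¹(∂_o ∧ (⋆_g X)) = -(1/√|det g|) g_∧(∂_o ⌟ (√|det g| g_∧⁻¹(X̂))). -/

import Mathlib

/- STATEMENT 12: Metric Hodge duality identity.  For a smooth metric field g on open
U ⊆ ℝⁿ with metric Hodge operator ⋆_g X = √|det g| g_∧⁻¹(X̃) τ (inverse
⋆_g⁻¹X = (-1)^q √|det g| τ g_∧⁻¹(X̃)), every smooth multivector field X satisfies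
⋆_g⁻¹(∂_o ∧ (⋆_g X)) = -(1/√|det g|) g_∧(∂_o ⌟ (√|det g| g_∧⁻¹(X̂))).
The fields Y = ⋆_g X and W = √|det g| g_∧⁻¹(X̂), being smooth, come with their
derivative fields Y', W'; ∂_o∧Y = Σ_μ b_μ ∧ ∂Y/∂x_μ, ∂_o⌟W = Σ_μ b_μ ⌟ ∂W/∂x_μ. -/

noncomputable section
open CliffordAlgebra

/-- the Euclidean quadratic form `v ↦ ⟪v,v⟫` on `ℝⁿ`. -/
def euclQ (n : ℕ) : QuadraticForm ℝ (EuclideanSpace ℝ (Fin n)) :=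
  LinearMap.BilinMap.toQuadraticMap (innerₗ (EuclideanSpace ℝ (Fin n)) : LinearMap.BilinForm ℝ (EuclideanSpace ℝ (Fin n)))

abbrev Mv (n : ℕ) := CliffordAlgebra (euclQ n)

/-- the standard orthonormal basis vectors of `ℝⁿ`. -/
def bv (n : ℕ) (i : Fin n) : EuclideanSpace ℝ (Fin n) := EuclideanSpace.single i 1

/-- the constant unit pseudoscalar `τ = b_1 b_2 ⋯ b_n`. -/
def tau (n : ℕ) : Mv n := (List.ofFn fun i => ι (euclQ n) (bv n i)).prod

/-- exterior product of a vector with a multivector inside the Clifford algebra. -/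
def vWedge {n : ℕ} (a : EuclideanSpace ℝ (Fin n)) (x : Mv n) : Mv n :=
  (2⁻¹ : ℝ) • (ι (euclQ n) a * x + involute x * ι (euclQ n) a)

/-- left contraction of a multivector by a vector inside the Clifford algebra. -/
def vLCont {n : ℕ} (a : EuclideanSpace ℝ (Fin n)) (x : Mv n) : Mv n :=
  (2⁻¹ : ℝ) • (ι (euclQ n) a * x - involute x * ι (euclQ n) a)

/-- the exterior-power extension (outermorphism) `f_∧` of a linear map `f`, acting on
multivectors. -/
def gext {n : ℕ} (f : EuclideanSpace ℝ (Fin n) →ₗ[ℝ] EuclideanSpace ℝ (Fin n)) :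
    Mv n →ₗ[ℝ] Mv n :=
  (equivExterior (euclQ n)).symm.toLinearMap ∘ₗ
    (ExteriorAlgebra.map f).toLinearMap ∘ₗ (equivExterior (euclQ n)).toLinearMap

/-- the determinant of (the linear map underlying) a continuous linear operator. -/
def cdet {n : ℕ} (f : EuclideanSpace ℝ (Fin n) →L[ℝ] EuclideanSpace ℝ (Fin n)) : ℝ :=
  LinearMap.det (f : EuclideanSpace ℝ (Fin n) →ₗ[ℝ] EuclideanSpace ℝ (Fin n))

/-- the quadratic form `v ↦ ⟪v, f v⟫` associated to an operator `f`. -/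
def opQ {n : ℕ} (f : EuclideanSpace ℝ (Fin n) →L[ℝ] EuclideanSpace ℝ (Fin n)) :
    QuadraticForm ℝ (EuclideanSpace ℝ (Fin n)) :=
  LinearMap.BilinMap.toQuadraticMap
    (LinearMap.mk₂ ℝ (fun u v => (inner ℝ u (f v) : ℝ))
      (fun u u' v => inner_add_left _ _ _)
      (fun c u v => by simp [smul_eq_mul, real_inner_smul_left, real_inner_smul_right, map_add, map_smul, inner_add_right])
      (fun u v v' => by simp [smul_eq_mul, real_inner_smul_left, real_inner_smul_right, map_add, map_smul, inner_add_right])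
      (fun c u v => by simp [smul_eq_mul, real_inner_smul_left, real_inner_smul_right, map_add, map_smul, inner_add_right]))

/-- the Clifford product associated to the quadratic form `Q'`, transported to the
Euclidean Clifford algebra (so all products live on the same underlying space of
multivectors). -/
def cmulQ {n : ℕ} (Q' : QuadraticForm ℝ (EuclideanSpace ℝ (Fin n))) (x y : Mv n) : Mv n :=
  (equivExterior (euclQ n)).symm ((equivExterior Q')
    ((equivExterior Q').symm (equivExterior (euclQ n) x) *
     (equivExterior Q').symm (equivExterior (euclQ n) y)))

/-- the metric Hodge operator `⋆_g X = √|det g| g⁻¹_∧(X̃) τ` (pointwise data). -/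
def starG {n : ℕ} (g ginv : EuclideanSpace ℝ (Fin n) →L[ℝ] EuclideanSpace ℝ (Fin n))
    (X : Mv n) : Mv n :=
  Real.sqrt |cdet g| • (gext (ginv : _ →ₗ[ℝ] _) (reverse X) * tau n)

/-- the inverse metric Hodge operator `⋆_g⁻¹ X = (-1)^q √|det g| τ g⁻¹_∧(X̃)`. -/
def starGinv {n : ℕ} (q : ℕ) (g ginv : EuclideanSpace ℝ (Fin n) →L[ℝ] EuclideanSpace ℝ (Fin n))
    (X : Mv n) : Mv n :=
  ((-1 : ℝ) ^ q * Real.sqrt |cdet g|) • (tau n * gext (ginv : _ →ₗ[ℝ] _) (reverse X))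

/-- `X' x` is the derivative of the multivector field `X` at each `x ∈ U`, weakly. -/
def IsDerivOn {n : ℕ} (U : Set (EuclideanSpace ℝ (Fin n))) (X : EuclideanSpace ℝ (Fin n) → Mv n)
    (X' : EuclideanSpace ℝ (Fin n) → EuclideanSpace ℝ (Fin n) →ₗ[ℝ] Mv n) : Prop :=
  ∀ ℓ : Mv n →ₗ[ℝ] ℝ, ∀ x ∈ U,
    HasFDerivAt (fun y => ℓ (X y)) (LinearMap.toContinuousLinearMap (ℓ ∘ₗ X' x)) x

namespace HodgeAux

open CliffordAlgebra ExteriorAlgebra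

variable {n : ℕ}

local notation "E" => EuclideanSpace ℝ (Fin n)
local notation "⟪" x ", " y "⟫" => (inner ℝ x y : ℝ)

/-- the covector `⟪a, ·⟫`. -/
def dl (a : EuclideanSpace ℝ (Fin n)) : Module.Dual ℝ (EuclideanSpace ℝ (Fin n)) :=
  innerₗ (EuclideanSpace ℝ (Fin n)) a

@[simp] lemma dl_apply (a v : E) : dl a v = ⟪a, v⟫ := rfl

lemma euclQ_apply (a : E) : euclQ n a = ⟪a, a⟫ := rfl

lemma polar_euclQ (a b : E) : QuadraticMap.polar (euclQ n) a b = 2 * ⟪a, b⟫ := by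
  simp only [QuadraticMap.polar, euclQ_apply]
  rw [inner_add_add_self (𝕜 := ℝ)]
  rw [real_inner_comm b a]
  ring

lemma ι_mul_add_swap (a b : E) :
    ι (euclQ n) a * ι (euclQ n) b + ι (euclQ n) b * ι (euclQ n) a
      = algebraMap ℝ _ (2 * ⟪a, b⟫) := by
  rw [CliffordAlgebra.ι_mul_ι_add_swap, polar_euclQ]

lemma involute_mul_ι (m : E) (x : Mv n) :
    involute (ι (euclQ n) m * x) = - (ι (euclQ n) m * involute x) := by
  rw [map_mul, involute_ι, neg_mul]

lemma vLCont_add_right (a : E) (x y : Mv n) :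
    vLCont a (x + y) = vLCont a x + vLCont a y := by
  simp only [vLCont, mul_add, add_mul, map_add]
  module

lemma vLCont_smul_right (a : E) (r : ℝ) (x : Mv n) :
    vLCont a (r • x) = r • vLCont a x := by
  simp only [vLCont, mul_smul_comm, smul_mul_assoc, map_smul]
  module

lemma vWedge_add_right (a : E) (x y : Mv n) :
    vWedge a (x + y) = vWedge a x + vWedge a y := by
  simp only [vWedge, mul_add, add_mul, map_add]
  module

lemma vWedge_smul_right (a : E) (r : ℝ) (x : Mv n) :
    vWedge a (r • x) = r • vWedge a x := by
  simp only [vWedge, mul_smul_comm, smul_mul_assoc, map_smul]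
  module

lemma vWedge_smul_left (a : E) (r : ℝ) (x : Mv n) :
    vWedge (r • a) x = r • vWedge a x := by
  simp only [vWedge, map_smul, smul_mul_assoc, mul_smul_comm]
  module

/-- `vLCont` is contraction by the dual covector. -/
lemma vLCont_eq_contractLeft (a : E) (x : Mv n) :
    vLCont a x = contractLeft (dl a) x := by
  induction x using CliffordAlgebra.left_induction with
  | algebraMap r =>
      simp only [vLCont, contractLeft_algebraMap]
      rw [AlgHom.commutes, Algebra.commutes]
      module
  | add x y hx hy => rw [vLCont_add_right, map_add, hx, hy]
  | ι_mul x m hx =>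
      rw [contractLeft_ι_mul, ← hx]
      simp only [vLCont, involute_mul_ι, dl_apply]
      have hswap : ι (euclQ n) a * ι (euclQ n) m
          = algebraMap ℝ _ (2 * ⟪a, m⟫) - ι (euclQ n) m * ι (euclQ n) a := by
        rw [← ι_mul_add_swap a m]; abel
      calc (2⁻¹ : ℝ) • (ι (euclQ n) a * (ι (euclQ n) m * x)
            - (-(ι (euclQ n) m * involute x)) * ι (euclQ n) a)
          = (2⁻¹ : ℝ) • ((ι (euclQ n) a * ι (euclQ n) m) * x
            + ι (euclQ n) m * (involute x * ι (euclQ n) a)) := by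
            simp only [mul_assoc, neg_mul, sub_neg_eq_add]
        _ = (2⁻¹ : ℝ) • ((algebraMap ℝ _ (2 * ⟪a, m⟫)) * x)
            - ι (euclQ n) m * ((2⁻¹ : ℝ) • (ι (euclQ n) a * x - involute x * ι (euclQ n) a)) := by
            rw [hswap]
            simp only [sub_mul, mul_sub, mul_smul_comm, smul_sub, mul_assoc]
            module
        _ = ⟪a, m⟫ • x - ι (euclQ n) m * ((2⁻¹ : ℝ) • (ι (euclQ n) a * x
              - involute x * ι (euclQ n) a)) := by
            have h2 : (2⁻¹ : ℝ) • ((algebraMap ℝ (Mv n) (2 * ⟪a, m⟫)) * x) = ⟪a, m⟫ • x := by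
              rw [← Algebra.smul_def, smul_smul]
              module
            rw [h2]

lemma ι_mul_eq (a : E) (x : Mv n) :
    ι (euclQ n) a * x = contractLeft (dl a) x + vWedge a x := by
  rw [← vLCont_eq_contractLeft]
  simp only [vLCont, vWedge]
  module

lemma vWedge_eq (a : E) (x : Mv n) :
    vWedge a x = ι (euclQ n) a * x - contractLeft (dl a) x := by
  rw [ι_mul_eq a x]; abel

section generalQ

variable {Q' : QuadraticForm ℝ (EuclideanSpace ℝ (Fin n))}

lemma involute_ι_mul (m : E) (x : CliffordAlgebra Q') :
    involute (ι Q' m * x) = - (ι Q' m * involute x) := by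
  rw [map_mul, involute_ι, neg_mul]

lemma contractLeft_involute (d : Module.Dual ℝ (EuclideanSpace ℝ (Fin n)))
    (x : CliffordAlgebra Q') :
    contractLeft d (involute x) = - involute (contractLeft d x) := by
  induction x using CliffordAlgebra.left_induction with
  | algebraMap r => simp
  | add x y hx hy => simp only [map_add, hx, hy]; abel
  | ι_mul x m hx =>
      rw [involute_ι_mul, map_neg, contractLeft_ι_mul, hx, contractLeft_ι_mul, map_sub,
        map_smul, involute_ι_mul]
      simp only [mul_neg, neg_sub, sub_neg_eq_add, neg_add, neg_neg]

lemma contractLeft_mul_ι (d : Module.Dual ℝ (EuclideanSpace ℝ (Fin n))) (m : E)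
    (x : CliffordAlgebra Q') :
    contractLeft d (x * ι Q' m) = contractLeft d x * ι Q' m + d m • involute x := by
  induction x using CliffordAlgebra.left_induction with
  | algebraMap r =>
      rw [← Algebra.smul_def, map_smul, contractLeft_ι,
        contractLeft_algebraMap, zero_mul, zero_add]
      rw [(involute (Q := Q')).commutes]
      rw [Algebra.algebraMap_eq_smul_one, Algebra.algebraMap_eq_smul_one, smul_smul, smul_smul,
        mul_comm]
  | add x y hx hy =>
      simp only [add_mul, map_add, hx, hy, smul_add]
      abel
  | ι_mul x m' hx =>
      rw [mul_assoc, contractLeft_ι_mul, hx, contractLeft_ι_mul, involute_ι_mul]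
      simp only [mul_add, sub_mul, smul_mul_assoc, mul_smul_comm, smul_sub, smul_neg, mul_assoc]
      module

lemma reverse_contractLeft (d : Module.Dual ℝ (EuclideanSpace ℝ (Fin n)))
    (x : CliffordAlgebra Q') :
    reverse (contractLeft d x) = - contractLeft d (reverse (involute x)) := by
  induction x using CliffordAlgebra.left_induction with
  | algebraMap r => simp
  | add x y hx hy =>
      simp only [map_add, hx, hy]; abel
  | ι_mul x m hx =>
      rw [contractLeft_ι_mul, map_sub, map_smul, reverse.map_mul, reverse_ι, hx,
        involute_ι_mul, map_neg, reverse.map_mul, reverse_ι, map_neg, neg_neg,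
        contractLeft_mul_ι]
      rw [show involute (reverse (involute x)) = reverse x by
        rw [← reverse_involute, involute_involute]]
      simp only [neg_mul, sub_neg_eq_add, neg_add, neg_neg]
      abel

end generalQ

/-- `equivExterior` specialized to the Euclidean form. -/
def toExt : Mv n ≃ₗ[ℝ] ExteriorAlgebra ℝ (EuclideanSpace ℝ (Fin n)) := equivExterior (euclQ n)

lemma bilinFormOfRealInner_isSymm :
    (innerₗ (EuclideanSpace ℝ (Fin n)) : LinearMap.BilinForm ℝ (EuclideanSpace ℝ (Fin n))).IsSymm := by
  refine ⟨fun x y => ?_⟩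
  simpa using real_inner_comm y x

lemma associated_euclQ :
    QuadraticMap.associated (R := ℝ) (euclQ n) = innerₗ (EuclideanSpace ℝ (Fin n)) :=
  QuadraticMap.associated_left_inverse ℝ bilinFormOfRealInner_isSymm.eq

lemma toExt_algebraMap (r : ℝ) :
    toExt (algebraMap ℝ (Mv n) r) = algebraMap ℝ _ r := by
  simp only [toExt, equivExterior, changeFormEquiv_apply]
  exact changeForm_algebraMap _ r

lemma toExt_ι (a : E) : toExt (ι (euclQ n) a) = ι (0 : QuadraticForm ℝ E) a := by
  simp only [toExt, equivExterior, changeFormEquiv_apply]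
  exact changeForm_ι _ a

lemma toExt_ι_mul (a : E) (x : Mv n) :
    toExt (ι (euclQ n) a * x)
      = ι (0 : QuadraticForm ℝ E) a * toExt x + contractLeft (dl a) (toExt x) := by
  simp only [toExt, equivExterior, changeFormEquiv_apply]
  rw [changeForm_ι_mul]
  have h2 : (QuadraticMap.associated (R := ℝ) (M := EuclideanSpace ℝ (Fin n)) (-(euclQ n))) a
      = -(dl a) := by
    rw [map_neg, associated_euclQ, LinearMap.neg_apply]
    rfl
  rw [h2]
  simp only [map_neg, LinearMap.neg_apply, sub_neg_eq_add]

lemma toExt_contractLeft (d : Module.Dual ℝ (EuclideanSpace ℝ (Fin n))) (x : Mv n) :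
    toExt (contractLeft d x) = contractLeft d (toExt x) := by
  simp only [toExt, equivExterior, changeFormEquiv_apply]
  exact changeForm_contractLeft _ d x

lemma toExt_vWedge (a : E) (x : Mv n) :
    toExt (vWedge a x) = ι (0 : QuadraticForm ℝ E) a * toExt x := by
  rw [vWedge_eq, map_sub, toExt_ι_mul, toExt_contractLeft]
  abel

set_option maxHeartbeats 1000000 in
lemma toExt_mul_ι (m : E) (x : Mv n) :
    toExt (x * ι (euclQ n) m)
      = toExt x * ι (0 : QuadraticForm ℝ E) m - contractLeft (dl m) (involute (toExt x)) := by
  induction x using CliffordAlgebra.left_induction with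
  | algebraMap r =>
      rw [← Algebra.smul_def, map_smul, toExt_ι, toExt_algebraMap,
        (involute (Q := (0 : QuadraticForm ℝ E))).commutes, contractLeft_algebraMap, sub_zero,
        ← Algebra.smul_def]
  | add x y hx hy =>
      simp only [add_mul, map_add, hx, hy]
      abel
  | ι_mul x a hx =>
      rw [mul_assoc, toExt_ι_mul, hx, toExt_ι_mul]
      simp only [map_sub, mul_sub, map_add, mul_add, involute_ι_mul, map_neg, mul_neg, neg_neg]
      rw [contractLeft_mul_ι (Q' := (0 : QuadraticForm ℝ E)) (dl a) m (toExt x)]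
      rw [contractLeft_comm (Q := (0 : QuadraticForm ℝ E)) (dl a) (dl m)]
      rw [contractLeft_involute (Q' := (0 : QuadraticForm ℝ E)) (dl a) (toExt x)]
      rw [contractLeft_ι_mul]
      have hsy : dl (n := n) m a = dl a m := by rw [dl_apply, dl_apply, real_inner_comm]
      rw [hsy]
      simp only [map_neg, mul_neg, neg_neg, sub_mul, add_mul, sub_neg_eq_add, smul_neg,
        ← mul_assoc]
      abel

lemma toExt_involute (x : Mv n) : toExt (involute x) = involute (toExt x) := by
  induction x using CliffordAlgebra.left_induction with
  | algebraMap r => rw [(involute (Q := euclQ n)).commutes, toExt_algebraMap,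
      (involute (Q := (0 : QuadraticForm ℝ E))).commutes]
  | add x y hx hy => rw [map_add, map_add, hx, hy, map_add, map_add]
  | ι_mul x m hx =>
      rw [involute_ι_mul, map_neg, toExt_ι_mul, hx, toExt_ι_mul, map_add, involute_ι_mul,
        contractLeft_involute (Q' := (0 : QuadraticForm ℝ E))]
      abel

lemma toExt_reverse (x : Mv n) : toExt (reverse x) = reverse (toExt x) := by
  induction x using CliffordAlgebra.left_induction with
  | algebraMap r => rw [reverse.commutes, toExt_algebraMap, reverse.commutes]
  | add x y hx hy => rw [map_add, map_add, hx, hy, map_add, map_add]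
  | ι_mul x m hx =>
      rw [reverse.map_mul, reverse_ι, toExt_mul_ι, hx, toExt_ι_mul, map_add, reverse.map_mul,
        reverse_ι, reverse_contractLeft (Q' := (0 : QuadraticForm ℝ E)), reverse_involute]
      abel


section mapExt

variable (f : EuclideanSpace ℝ (Fin n) →ₗ[ℝ] EuclideanSpace ℝ (Fin n))

lemma mapExt_involute (y : ExteriorAlgebra ℝ (EuclideanSpace ℝ (Fin n))) :
    ExteriorAlgebra.map f (involute y) = involute (ExteriorAlgebra.map f y) := by
  induction y using CliffordAlgebra.left_induction with
  | algebraMap r => simp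
  | add x y hx hy => rw [map_add, map_add, hx, hy, map_add, map_add]
  | ι_mul x m hx =>
      rw [involute_ι_mul, map_neg, map_mul, ExteriorAlgebra.map_apply_ι, hx, map_mul,
        ExteriorAlgebra.map_apply_ι, involute_ι_mul]

lemma mapExt_reverse (y : ExteriorAlgebra ℝ (EuclideanSpace ℝ (Fin n))) :
    ExteriorAlgebra.map f (reverse y) = reverse (ExteriorAlgebra.map f y) := by
  induction y using CliffordAlgebra.left_induction with
  | algebraMap r => simp
  | add x y hx hy => rw [map_add, map_add, hx, hy, map_add, map_add]
  | ι_mul x m hx =>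
      rw [reverse.map_mul, reverse_ι, map_mul, ExteriorAlgebra.map_apply_ι, hx, map_mul,
        ExteriorAlgebra.map_apply_ι, reverse.map_mul, reverse_ι]

lemma mapExt_contractLeft (d : Module.Dual ℝ (EuclideanSpace ℝ (Fin n)))
    (y : ExteriorAlgebra ℝ (EuclideanSpace ℝ (Fin n))) :
    contractLeft d (ExteriorAlgebra.map f y)
      = ExteriorAlgebra.map f (contractLeft (d ∘ₗ f) y) := by
  induction y using CliffordAlgebra.left_induction with
  | algebraMap r => rw [AlgHom.commutes, contractLeft_algebraMap, contractLeft_algebraMap,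
      map_zero]
  | add x y hx hy => rw [map_add, map_add, hx, hy, map_add, map_add]
  | ι_mul x m hx =>
      rw [map_mul, ExteriorAlgebra.map_apply_ι, contractLeft_ι_mul, contractLeft_ι_mul,
        map_sub, map_smul, map_mul, ExteriorAlgebra.map_apply_ι, hx]
      simp [LinearMap.comp_apply]

end mapExt

section gextLemmas

variable (f : EuclideanSpace ℝ (Fin n) →ₗ[ℝ] EuclideanSpace ℝ (Fin n))

lemma toExt_gext (x : Mv n) : toExt (gext f x) = ExteriorAlgebra.map f (toExt x) := by
  simp only [gext, toExt, LinearMap.coe_comp, Function.comp_apply, LinearEquiv.coe_coe,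
    AlgHom.toLinearMap_apply]
  exact (equivExterior (euclQ n)).apply_symm_apply _

lemma gext_algebraMap (r : ℝ) : gext f (algebraMap ℝ (Mv n) r) = algebraMap ℝ (Mv n) r := by
  apply toExt.injective
  rw [toExt_gext, toExt_algebraMap, AlgHom.commutes]

lemma gext_vWedge (a : E) (x : Mv n) :
    gext f (vWedge a x) = vWedge (f a) (gext f x) := by
  apply toExt.injective
  rw [toExt_gext, toExt_vWedge, map_mul, ExteriorAlgebra.map_apply_ι, toExt_vWedge, toExt_gext]

lemma gext_involute (x : Mv n) : gext f (involute x) = involute (gext f x) := by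
  apply toExt.injective
  rw [toExt_gext, toExt_involute, mapExt_involute, toExt_involute, toExt_gext]

lemma gext_reverse (x : Mv n) : gext f (reverse x) = reverse (gext f x) := by
  apply toExt.injective
  rw [toExt_gext, toExt_reverse, mapExt_reverse, toExt_reverse, toExt_gext]

lemma gext_contractLeft (d : Module.Dual ℝ (EuclideanSpace ℝ (Fin n))) (x : Mv n) :
    contractLeft d (gext f x) = gext f (contractLeft (d ∘ₗ f) x) := by
  apply toExt.injective
  rw [toExt_contractLeft, toExt_gext, mapExt_contractLeft, toExt_gext, toExt_contractLeft]

lemma gext_contract_eigen (u : E) (c : ℝ) (hc : c ≠ 0)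
    (h : dl (n := n) u ∘ₗ f = c • dl u) (x : Mv n) :
    gext f (contractLeft (dl u) x) = c⁻¹ • contractLeft (dl u) (gext f x) := by
  have h2 : contractLeft (dl u) (gext f x) = c • gext f (contractLeft (dl u) x) := by
    rw [gext_contractLeft, h, map_smul, LinearMap.smul_apply, map_smul]
  rw [h2, inv_smul_smul₀ hc]

end gextLemmas

section tauLemmas

/-- product of basis blades indexed by a list. -/
def Pl (l : List (Fin n)) : Mv n := (l.map fun i => ι (euclQ n) (bv n i)).prod

@[simp] lemma Pl_nil : Pl ([] : List (Fin n)) = 1 := rfl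

@[simp] lemma Pl_cons (i : Fin n) (l : List (Fin n)) :
    Pl (i :: l) = ι (euclQ n) (bv n i) * Pl l := by simp [Pl]

lemma inner_bv (i j : Fin n) : ⟪bv n i, bv n j⟫ = if i = j then 1 else 0 := by
  simp only [bv, EuclideanSpace.inner_single_left, EuclideanSpace.single_apply]
  simp [eq_comm]

lemma ι_bv_sq (i : Fin n) : ι (euclQ n) (bv n i) * ι (euclQ n) (bv n i) = 1 := by
  rw [ι_sq_scalar]
  have : euclQ n (bv n i) = 1 := by
    rw [euclQ_apply, inner_bv, if_pos rfl]
  rw [this, map_one]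

lemma ι_bv_anticomm {i j : Fin n} (h : i ≠ j) :
    ι (euclQ n) (bv n i) * ι (euclQ n) (bv n j)
      = -(ι (euclQ n) (bv n j) * ι (euclQ n) (bv n i)) := by
  have h0 := ι_mul_add_swap (n := n) (bv n i) (bv n j)
  rw [inner_bv, if_neg h] at h0
  simp only [mul_zero, map_zero] at h0
  linear_combination (norm := module) h0

lemma bv_comm_Pl (l : List (Fin n)) (i : Fin n) (h : i ∉ l) :
    ι (euclQ n) (bv n i) * Pl l = ((-1 : ℝ) ^ l.length) • (Pl l * ι (euclQ n) (bv n i)) := by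
  induction l with
  | nil => simp
  | cons j t ih =>
      have hij : i ≠ j := fun e => h (e ▸ List.mem_cons_self)
      have hit : i ∉ t := fun e => h (List.mem_cons_of_mem j e)
      rw [Pl_cons, ← mul_assoc, ι_bv_anticomm hij, neg_mul, mul_assoc, ih hit]
      rw [List.length_cons, pow_succ]
      simp only [mul_smul_comm, smul_smul, mul_assoc]
      module

lemma bv_comm_Pl_mem (l : List (Fin n)) (hnd : l.Nodup) (i : Fin n) (h : i ∈ l) :
    ι (euclQ n) (bv n i) * Pl l
      = ((-1 : ℝ) ^ (l.length - 1)) • (Pl l * ι (euclQ n) (bv n i)) := by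
  induction l with
  | nil => exact absurd h List.not_mem_nil
  | cons j t ih =>
      rcases List.mem_cons.mp h with rfl | hit
      · have hnt : i ∉ t := (List.nodup_cons.mp hnd).1
        have h2 : ((-1 : ℝ) ^ t.length) • (ι (euclQ n) (bv n i) * Pl t)
            = Pl t * ι (euclQ n) (bv n i) := by
          rw [bv_comm_Pl t i hnt, smul_smul, ← pow_add,
            Even.neg_one_pow ⟨t.length, rfl⟩, one_smul]
        rw [Pl_cons, ← mul_assoc, ι_bv_sq, one_mul, List.length_cons, Nat.add_sub_cancel,
          mul_assoc, ← h2, mul_smul_comm, smul_smul, ← pow_add,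
          Even.neg_one_pow ⟨t.length, rfl⟩, one_smul, ← mul_assoc, ι_bv_sq, one_mul]
      · have hjt : j ∉ t := (List.nodup_cons.mp hnd).1
        have hij : i ≠ j := fun e => hjt (e ▸ hit)
        obtain ⟨k, hk⟩ : ∃ k, t.length = k + 1 :=
          ⟨t.length - 1, (Nat.succ_pred_eq_of_pos (List.length_pos_iff.mpr
            (List.ne_nil_of_mem hit))).symm⟩
        rw [Pl_cons, ← mul_assoc, ι_bv_anticomm hij, neg_mul, mul_assoc,
          ih (List.nodup_cons.mp hnd).2 hit]
        rw [List.length_cons, hk]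
        simp only [Nat.add_sub_cancel, pow_succ]
        simp only [mul_smul_comm, smul_smul, mul_assoc]
        module

end tauLemmas


section tauLemmas2

lemma tau_eq_Pl : tau n = Pl (List.finRange n) := by
  simp only [tau, Pl, List.ofFn_eq_map]

lemma bv_comm_tau (i : Fin n) :
    ι (euclQ n) (bv n i) * tau n = ((-1 : ℝ) ^ (n + 1)) • (tau n * ι (euclQ n) (bv n i)) := by
  obtain ⟨m, rfl⟩ : ∃ m, n = m + 1 := ⟨n - 1, (Nat.succ_pred_eq_of_pos i.pos).symm⟩
  have h := bv_comm_Pl_mem (List.finRange (m + 1)) (List.nodup_finRange _) i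
    (List.mem_finRange i)
  rw [← tau_eq_Pl, List.length_finRange] at h
  rw [h, Nat.add_sub_cancel]
  congr 1
  rw [show m + 1 + 1 = m + 2 by ring, pow_add]
  norm_num

lemma vec_comm_tau (a : E) :
    ι (euclQ n) a * tau n = ((-1 : ℝ) ^ (n + 1)) • (tau n * ι (euclQ n) a) := by
  have key : (LinearMap.mulRight ℝ (tau n)) ∘ₗ (ι (euclQ n))
      = ((-1 : ℝ) ^ (n + 1)) • ((LinearMap.mulLeft ℝ (tau n)) ∘ₗ (ι (euclQ n))) := by
    apply Module.Basis.ext (EuclideanSpace.basisFun (Fin n) ℝ).toBasis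
    intro i
    simp only [LinearMap.comp_apply, LinearMap.smul_apply, LinearMap.mulRight_apply,
      LinearMap.mulLeft_apply, OrthonormalBasis.coe_toBasis, EuclideanSpace.basisFun_apply]
    exact bv_comm_tau i
  have h := DFunLike.congr_fun key a
  simpa only [LinearMap.comp_apply, LinearMap.smul_apply, LinearMap.mulRight_apply,
    LinearMap.mulLeft_apply] using h

lemma involute_Pl (l : List (Fin n)) :
    involute (Pl l) = ((-1 : ℝ) ^ l.length) • Pl l := by
  induction l with
  | nil => simp
  | cons j t ih =>
      rw [Pl_cons, map_mul, involute_ι, ih, List.length_cons, pow_succ]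
      simp only [neg_mul, mul_smul_comm, smul_smul, smul_mul_assoc]
      module

lemma involute_tau : involute (tau n) = ((-1 : ℝ) ^ n) • tau n := by
  rw [tau_eq_Pl, involute_Pl, List.length_finRange]

lemma involute_tau_mul_ι (a : E) :
    involute (tau n) * ι (euclQ n) a = -(ι (euclQ n) a * tau n) := by
  rw [involute_tau, vec_comm_tau, smul_mul_assoc, pow_succ]
  simp only [mul_neg, mul_one, neg_smul, neg_neg]

/-- the reversed-list blade product. -/
def Pr (l : List (Fin n)) : Mv n := ((l.map fun i => ι (euclQ n) (bv n i)).reverse).prod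

lemma reverse_Pl (l : List (Fin n)) : reverse (Pl l) = Pr l := by
  have h := reverse_prod_map_ι (Q := euclQ n) (l.map (bv n))
  simp only [List.map_map] at h
  simpa only [Pl, Pr, List.map_map, Function.comp_def] using h

lemma Pl_mul_Pr (l : List (Fin n)) : Pl l * Pr l = 1 := by
  induction l with
  | nil => simp [Pr]
  | cons j t ih =>
      have hPr : Pr (j :: t) = Pr t * ι (euclQ n) (bv n j) := by
        simp only [Pr, List.map_cons, List.reverse_cons, List.prod_append, List.prod_cons,
          List.prod_nil, mul_one]
      rw [Pl_cons, hPr, mul_assoc, ← mul_assoc (Pl t), ih, one_mul, ι_bv_sq]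

lemma tau_mul_reverse_tau : tau n * reverse (tau n) = 1 := by
  rw [tau_eq_Pl, reverse_Pl, Pl_mul_Pr]

lemma vWedge_mul_tau (a : E) (x : Mv n) :
    vWedge a (x * tau n) = vLCont a x * tau n := by
  simp only [vWedge, vLCont, map_mul]
  rw [mul_assoc (involute x), involute_tau_mul_ι]
  simp only [mul_neg, smul_mul_assoc, sub_mul, add_mul, mul_assoc]
  module

lemma vLCont_mul_tau (a : E) (x : Mv n) :
    vLCont a (x * tau n) = vWedge a x * tau n := by
  simp only [vWedge, vLCont, map_mul]
  rw [mul_assoc (involute x), involute_tau_mul_ι]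
  simp only [mul_neg, smul_mul_assoc, sub_mul, add_mul, mul_assoc]
  module

lemma vLCont_reverse_involute (a : E) (w : Mv n) :
    vLCont a (reverse (involute w)) = - reverse (vLCont a w) := by
  simp only [vLCont]
  rw [map_smul, map_sub, reverse.map_mul, reverse.map_mul, reverse_ι]
  rw [show involute (reverse (involute w)) = reverse w by
    rw [← reverse_involute, involute_involute]]
  module

end tauLemmas2

section detLemmas

lemma alt_expand {V : Type*} [AddCommGroup V] [Module ℝ V]
    (b : Module.Basis (Fin n) ℝ (EuclideanSpace ℝ (Fin n)))
    (A : (EuclideanSpace ℝ (Fin n)) [⋀^Fin n]→ₗ[ℝ] V) (v : Fin n → EuclideanSpace ℝ (Fin n)) :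
    A v = b.det v • A b := by
  rw [← sub_eq_zero]
  apply (Module.forall_dual_apply_eq_zero_iff ℝ _).mp
  intro φ
  have h := (φ.compAlternatingMap A).eq_smul_basis_det b
  have h2 := DFunLike.congr_fun h v
  simp only [LinearMap.compAlternatingMap_apply, AlternatingMap.smul_apply, smul_eq_mul] at h2
  rw [map_sub, map_smul, h2, smul_eq_mul, mul_comm, sub_self]

lemma euclBasis_eq_bv : ⇑(EuclideanSpace.basisFun (Fin n) ℝ).toBasis = bv n := by
  funext i
  rw [OrthonormalBasis.coe_toBasis, EuclideanSpace.basisFun_apply]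
  rfl

lemma mapExt_ιMulti_bv (f : EuclideanSpace ℝ (Fin n) →ₗ[ℝ] EuclideanSpace ℝ (Fin n)) :
    ExteriorAlgebra.map f (ExteriorAlgebra.ιMulti ℝ n (bv n))
      = (LinearMap.det f) • ExteriorAlgebra.ιMulti ℝ n (bv n) := by
  rw [ExteriorAlgebra.map_apply_ιMulti]
  have hb := euclBasis_eq_bv (n := n)
  rw [← hb]
  rw [alt_expand (EuclideanSpace.basisFun (Fin n) ℝ).toBasis (ExteriorAlgebra.ιMulti ℝ n)
    (f ∘ ⇑(EuclideanSpace.basisFun (Fin n) ℝ).toBasis)]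
  rw [Module.Basis.det_comp, Module.Basis.det_self, mul_one]

lemma contract_Plext (d : Module.Dual ℝ (EuclideanSpace ℝ (Fin n))) (l : List (Fin n))
    (h : ∀ j ∈ l, d (bv n j) = 0) :
    contractLeft d ((l.map fun i => ι (0 : QuadraticForm ℝ E) (bv n i)).prod) = 0 := by
  induction l with
  | nil => simp
  | cons j t ih =>
      rw [List.map_cons, List.prod_cons, contractLeft_ι_mul, h j (List.mem_cons_self),
        ih fun k hk => h k (List.mem_cons_of_mem j hk)]
      simp

lemma toExt_Pl (l : List (Fin n)) (hnd : l.Nodup) :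
    toExt (Pl l) = (l.map fun i => ι (0 : QuadraticForm ℝ E) (bv n i)).prod := by
  induction l with
  | nil => simpa [Pl] using toExt_algebraMap (n := n) 1
  | cons j t ih =>
      rw [Pl_cons, toExt_ι_mul, ih (List.nodup_cons.mp hnd).2, List.map_cons, List.prod_cons]
      have hz : contractLeft (dl (bv n j))
          ((t.map fun i => ι (0 : QuadraticForm ℝ E) (bv n i)).prod) = 0 := by
        apply contract_Plext
        intro k hk
        have : j ≠ k := fun e => (List.nodup_cons.mp hnd).1 (e ▸ hk)
        rw [dl_apply, inner_bv, if_neg this]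
      rw [hz, add_zero]

lemma toExt_tau : toExt (tau n) = ExteriorAlgebra.ιMulti ℝ n (bv n) := by
  rw [ExteriorAlgebra.ιMulti_apply, tau_eq_Pl, toExt_Pl _ (List.nodup_finRange n),
    List.ofFn_eq_map]

lemma gext_tau (f : EuclideanSpace ℝ (Fin n) →ₗ[ℝ] EuclideanSpace ℝ (Fin n)) :
    gext f (tau n) = (LinearMap.det f) • tau n := by
  apply toExt.injective
  rw [toExt_gext, toExt_tau, mapExt_ιMulti_bv, map_smul, toExt_tau]

end detLemmas


section crux

lemma crux (f fi : EuclideanSpace ℝ (Fin n) →ₗ[ℝ] EuclideanSpace ℝ (Fin n))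
    (u : Fin n → EuclideanSpace ℝ (Fin n)) (c : Fin n → ℝ) (hc : ∀ i, c i ≠ 0)
    (hspan : ∀ a : EuclideanSpace ℝ (Fin n), ∑ i, (inner ℝ (u i) a : ℝ) • u i = a)
    (hfd : ∀ i, dl (n := n) (u i) ∘ₗ f = c i • dl (u i))
    (hfid : ∀ i, dl (n := n) (u i) ∘ₗ fi = (c i)⁻¹ • dl (u i))
    (hfu : ∀ i, f (u i) = c i • u i)
    (hfiu : ∀ i, fi (u i) = (c i)⁻¹ • u i)
    (x : Mv n) :
    gext f (x * tau n) = (LinearMap.det f) • (gext fi x * tau n) := by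
  induction x using CliffordAlgebra.left_induction with
  | algebraMap r =>
      rw [← Algebra.smul_def, map_smul, gext_tau, gext_algebraMap, ← Algebra.smul_def,
        smul_comm]
  | add x y hx hy =>
      rw [add_mul, map_add, hx, hy, map_add, add_mul, smul_add]
  | ι_mul x a hx =>
      have main : ∀ i, gext f ((ι (euclQ n) (u i) * x) * tau n)
          = LinearMap.det f • (gext fi (ι (euclQ n) (u i) * x) * tau n) := by
        intro i
        have hR : gext fi (ι (euclQ n) (u i) * x)
            = (c i) • contractLeft (dl (u i)) (gext fi x)
              + (c i)⁻¹ • vWedge (u i) (gext fi x) := by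
          rw [ι_mul_eq, map_add,
            gext_contract_eigen fi (u i) ((c i)⁻¹) (inv_ne_zero (hc i)) (hfid i),
            inv_inv, gext_vWedge, hfiu i, vWedge_smul_left]
        have hL : gext f (ι (euclQ n) (u i) * (x * tau n))
            = (c i)⁻¹ • contractLeft (dl (u i)) (gext f (x * tau n))
              + (c i) • vWedge (u i) (gext f (x * tau n)) := by
          rw [ι_mul_eq, map_add, gext_contract_eigen f (u i) (c i) (hc i) (hfd i),
            gext_vWedge, hfu i, vWedge_smul_left]
        rw [mul_assoc, hL, hx, hR]
        rw [map_smul, vWedge_smul_right]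
        rw [← vLCont_eq_contractLeft, ← vLCont_eq_contractLeft]
        rw [vLCont_mul_tau, vWedge_mul_tau]
        simp only [add_mul, smul_mul_assoc, smul_smul, smul_add]
        module
      have ha : (ι (euclQ n) a : Mv n)
          = ∑ i, (inner ℝ (u i) a : ℝ) • ι (euclQ n) (u i) := by
        conv_lhs => rw [← hspan a]
        rw [map_sum]
        simp only [map_smul]
      rw [ha, Finset.sum_mul, Finset.sum_mul, map_sum, map_sum, Finset.sum_mul,
        Finset.smul_sum]
      refine Finset.sum_congr rfl fun i _ => ?_
      rw [smul_mul_assoc, smul_mul_assoc, map_smul, map_smul, smul_mul_assoc, main i,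
        smul_comm]

lemma crux_apply (g gi : EuclideanSpace ℝ (Fin n) →ₗ[ℝ] EuclideanSpace ℝ (Fin n))
    (hsym : ∀ u v : EuclideanSpace ℝ (Fin n), ⟪g u, v⟫ = ⟪u, g v⟫)
    (h1 : g ∘ₗ gi = LinearMap.id) (h2 : gi ∘ₗ g = LinearMap.id)
    (x : Mv n) :
    gext gi (x * tau n) = (LinearMap.det gi) • (gext g x * tau n) := by
  have hTsym : (g : EuclideanSpace ℝ (Fin n) →ₗ[ℝ] EuclideanSpace ℝ (Fin n)).IsSymmetric :=
    fun u v => hsym u v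
  have hn : Module.finrank ℝ (EuclideanSpace ℝ (Fin n)) = n := finrank_euclideanSpace_fin
  set u := hTsym.eigenvectorBasis hn with hu
  set lam := hTsym.eigenvalues hn with hlam
  have hgu : ∀ i, g (u i) = lam i • u i := fun i => by
    have h := hTsym.apply_eigenvectorBasis hn i
    exact_mod_cast h
  have hgiId : ∀ v, gi (g v) = v := fun v => by
    have := DFunLike.congr_fun h2 v
    simpa using this
  have hlamne : ∀ i, lam i ≠ 0 := by
    intro i hzero
    have h0 : g (u i) = 0 := by rw [hgu i, hzero, zero_smul]
    have : (u i : EuclideanSpace ℝ (Fin n)) = 0 := by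
      have := hgiId (u i)
      rw [h0, map_zero] at this
      exact this.symm
    exact (u.toBasis.ne_zero i) (by simpa using this)
  have hgiu : ∀ i, gi (u i) = (lam i)⁻¹ • u i := by
    intro i
    have h3 : gi (g (u i)) = u i := hgiId (u i)
    rw [hgu i, map_smul] at h3
    have h4 := congrArg (fun w => (lam i)⁻¹ • w) h3
    simp only [smul_smul, inv_mul_cancel₀ (hlamne i), one_smul] at h4
    exact h4
  have hgd : ∀ i, dl (n := n) (u i) ∘ₗ g = lam i • dl (u i) := by
    intro i
    apply LinearMap.ext
    intro v
    simp only [LinearMap.comp_apply, LinearMap.smul_apply, dl_apply, smul_eq_mul]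
    rw [← hsym (u i) v, hgu i, real_inner_smul_left]
  have hgid : ∀ i, dl (n := n) (u i) ∘ₗ gi = (lam i)⁻¹ • dl (u i) := by
    intro i
    apply LinearMap.ext
    intro v
    simp only [LinearMap.comp_apply, LinearMap.smul_apply, dl_apply, smul_eq_mul]
    have hggi : g (gi v) = v := by
      have := DFunLike.congr_fun h1 v
      simpa using this
    have h4 : ⟪u i, v⟫ = lam i * ⟪u i, gi v⟫ := by
      calc ⟪u i, v⟫ = ⟪u i, g (gi v)⟫ := by rw [hggi]
        _ = ⟪g (u i), gi v⟫ := (hsym (u i) (gi v)).symm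
        _ = lam i * ⟪u i, gi v⟫ := by rw [hgu i, real_inner_smul_left]
    rw [h4, ← mul_assoc, inv_mul_cancel₀ (hlamne i), one_mul]
  exact crux gi g u (fun i => (lam i)⁻¹) (fun i => inv_ne_zero (hlamne i))
    (fun a => u.sum_repr' a) hgid
    (by intro i; rw [inv_inv]; exact hgd i)
    hgiu
    (by intro i; rw [inv_inv]; exact hgu i)
    x

end crux


section assembly

lemma main_pointwise (g gi : EuclideanSpace ℝ (Fin n) →ₗ[ℝ] EuclideanSpace ℝ (Fin n))
    (hsym : ∀ u v : EuclideanSpace ℝ (Fin n), ⟪g u, v⟫ = ⟪u, g v⟫)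
    (h1 : g ∘ₗ gi = LinearMap.id) (h2 : gi ∘ₗ g = LinearMap.id) (q : ℕ)
    (hq : LinearMap.det g = (-1 : ℝ) ^ q * |LinearMap.det g|) (C : Mv n) :
    ((-1 : ℝ) ^ q * Real.sqrt |LinearMap.det g|) •
        (tau n * gext gi (reverse (-(reverse C * tau n))))
      = -((Real.sqrt |LinearMap.det g|)⁻¹ • gext g C) := by
  have hdet1 : LinearMap.det g * LinearMap.det gi = 1 := by
    rw [← LinearMap.det_comp, h1, LinearMap.det_id]
  have hdg : LinearMap.det g ≠ 0 := left_ne_zero_of_mul_eq_one hdet1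
  set s := Real.sqrt |LinearMap.det g| with hs
  have hspos : 0 < s := Real.sqrt_pos.mpr (abs_pos.mpr hdg)
  have hss : s * s = |LinearMap.det g| := Real.mul_self_sqrt (abs_nonneg _)
  have e1 : reverse (-(reverse C * tau n)) = -(reverse (tau n) * C) := by
    rw [map_neg, reverse.map_mul, reverse_reverse]
  have e2 : gext gi (reverse (tau n) * C)
      = (LinearMap.det gi) • (reverse (tau n) * gext g C) := by
    have e3 : reverse (tau n) * C = reverse (reverse C * tau n) := by
      rw [reverse.map_mul, reverse_reverse]
    rw [e3, gext_reverse gi (reverse C * tau n), crux_apply g gi hsym h1 h2 (reverse C),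
      map_smul, reverse.map_mul, ← gext_reverse, reverse_reverse]
  rw [e1, map_neg, e2]
  rw [mul_neg, mul_smul_comm, ← mul_assoc, tau_mul_reverse_tau, one_mul]
  rw [smul_neg, smul_smul]
  have hq2 : ((-1 : ℝ) ^ q) * ((-1 : ℝ) ^ q) = 1 := by
    rw [← pow_add]; exact Even.neg_one_pow ⟨q, rfl⟩
  have hdgi : LinearMap.det gi = ((-1 : ℝ) ^ q) * (s * s)⁻¹ := by
    have hinv : LinearMap.det gi = (LinearMap.det g)⁻¹ :=
      eq_inv_of_mul_eq_one_right hdet1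
    rw [hinv, hq, ← hss, mul_inv, ← inv_pow, inv_neg, inv_one]
  have hsc : (-1 : ℝ) ^ q * s * LinearMap.det gi = s⁻¹ := by
    rw [hdgi]
    calc (-1 : ℝ) ^ q * s * ((-1 : ℝ) ^ q * (s * s)⁻¹)
        = ((-1 : ℝ) ^ q * (-1 : ℝ) ^ q) * (s * (s * s)⁻¹) := by ring
      _ = s * (s * s)⁻¹ := by rw [hq2, one_mul]
      _ = s⁻¹ := by rw [mul_inv, ← mul_assoc, mul_inv_cancel₀ hspos.ne', one_mul]
  rw [hsc]

end assembly


end HodgeAux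

open HodgeAux in
theorem metric_hodge_duality_identity {n : ℕ}
    (U : Set (EuclideanSpace ℝ (Fin n))) (hU : IsOpen U)
    (g ginv : EuclideanSpace ℝ (Fin n) →
      EuclideanSpace ℝ (Fin n) →L[ℝ] EuclideanSpace ℝ (Fin n))
    (hsmooth : ContDiffOn ℝ (⊤ : ℕ∞) g U)
    (hsym : ∀ x ∈ U, ∀ u v, (inner ℝ (g x u) v : ℝ) = inner ℝ u (g x v))
    (hinv : ∀ x ∈ U, (g x).comp (ginv x) = ContinuousLinearMap.id ℝ _ ∧
                     (ginv x).comp (g x) = ContinuousLinearMap.id ℝ _)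
    (q : ℕ) (hq : ∀ x ∈ U, cdet (g x) = (-1 : ℝ) ^ q * |cdet (g x)|)
    (X : EuclideanSpace ℝ (Fin n) → Mv n)
    (X' : EuclideanSpace ℝ (Fin n) → EuclideanSpace ℝ (Fin n) →ₗ[ℝ] Mv n)
    (hX : IsDerivOn U X X')
    (hXsmooth : ∀ ℓ : Mv n →ₗ[ℝ] ℝ, ContDiffOn ℝ (⊤ : ℕ∞) (fun y => ℓ (X y)) U)
    -- the field Y = ⋆_g X and its derivative Y' :
    (Y : EuclideanSpace ℝ (Fin n) → Mv n)
    (hY : ∀ x ∈ U, Y x = starG (g x) (ginv x) (X x))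
    (Y' : EuclideanSpace ℝ (Fin n) → EuclideanSpace ℝ (Fin n) →ₗ[ℝ] Mv n)
    (hY' : IsDerivOn U Y Y')
    -- the field W = √|det g| g_∧⁻¹(X̂) and its derivative W' :
    (W : EuclideanSpace ℝ (Fin n) → Mv n)
    (hW : ∀ x ∈ U, W x = Real.sqrt |cdet (g x)| • gext (ginv x : _ →ₗ[ℝ] _) (involute (X x)))
    (W' : EuclideanSpace ℝ (Fin n) → EuclideanSpace ℝ (Fin n) →ₗ[ℝ] Mv n)
    (hW' : IsDerivOn U W W') :
    ∀ x ∈ U,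
      starGinv q (g x) (ginv x) (∑ μ, vWedge (bv n μ) (Y' x (bv n μ)))
        = -((Real.sqrt |cdet (g x)|)⁻¹) •
            gext (g x : _ →ₗ[ℝ] _) (∑ μ, vLCont (bv n μ) (W' x (bv n μ))) := by
  intro x hx
  have h1 : ((g x : EuclideanSpace ℝ (Fin n) →ₗ[ℝ] EuclideanSpace ℝ (Fin n))) ∘ₗ
      ((ginv x : EuclideanSpace ℝ (Fin n) →ₗ[ℝ] EuclideanSpace ℝ (Fin n))) = LinearMap.id := by
    rw [← ContinuousLinearMap.toLinearMap_comp, (hinv x hx).1, ContinuousLinearMap.coe_id]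
  have h2 : ((ginv x : EuclideanSpace ℝ (Fin n) →ₗ[ℝ] EuclideanSpace ℝ (Fin n))) ∘ₗ
      ((g x : EuclideanSpace ℝ (Fin n) →ₗ[ℝ] EuclideanSpace ℝ (Fin n))) = LinearMap.id := by
    rw [← ContinuousLinearMap.toLinearMap_comp, (hinv x hx).2, ContinuousLinearMap.coe_id]
  set L : Mv n →ₗ[ℝ] Mv n :=
    (LinearMap.mulRight ℝ (tau n)) ∘ₗ (reverse (Q := euclQ n)) ∘ₗ
      (involute (Q := euclQ n)).toLinearMap with hLdef
  have hLapp : ∀ w : Mv n, L w = reverse (involute w) * tau n := fun w => rfl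
  have hYW : ∀ y ∈ U, Y y = L (W y) := by
    intro y hy
    rw [hY y hy, hW y hy, starG, map_smul, hLapp]
    congr 1
    rw [← gext_involute, involute_involute, ← gext_reverse]
  have hder : ∀ v : EuclideanSpace ℝ (Fin n), Y' x v = L (W' x v) := by
    intro v
    have key : ∀ ℓ : Module.Dual ℝ (Mv n), ℓ (Y' x v) = ℓ (L (W' x v)) := by
      intro ℓ
      have hYd := hY' ℓ x hx
      have hWd := hW' (ℓ ∘ₗ L) x hx
      have heq : (fun y => (ℓ ∘ₗ L) (W y)) =ᶠ[nhds x] (fun y => ℓ (Y y)) := by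
        filter_upwards [hU.mem_nhds hx] with y hy
        simp only [LinearMap.comp_apply]
        rw [hYW y hy]
      have hWd' : HasFDerivAt (fun y => ℓ (Y y))
          (LinearMap.toContinuousLinearMap ((ℓ ∘ₗ L) ∘ₗ W' x)) x :=
        hWd.congr_of_eventuallyEq heq.symm
      have huniq := hYd.unique hWd'
      have happ := DFunLike.congr_fun huniq v
      simpa only [LinearMap.coe_toContinuousLinearMap', LinearMap.comp_apply] using happ
    have hz : ∀ ℓ : Module.Dual ℝ (Mv n), ℓ (Y' x v - L (W' x v)) = 0 := fun ℓ => by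
      rw [map_sub, key ℓ, sub_self]
    exact sub_eq_zero.mp ((Module.forall_dual_apply_eq_zero_iff ℝ _).mp hz)
  have hsum : (∑ μ, vWedge (bv n μ) (Y' x (bv n μ)))
      = -(reverse (∑ μ, vLCont (bv n μ) (W' x (bv n μ))) * tau n) := by
    rw [map_sum, Finset.sum_mul, ← Finset.sum_neg_distrib]
    refine Finset.sum_congr rfl fun μ _ => ?_
    rw [hder (bv n μ), hLapp, vWedge_mul_tau, vLCont_reverse_involute, neg_mul]
  rw [hsum]
  simp only [starGinv, cdet]
  rw [main_pointwise (g x : EuclideanSpace ℝ (Fin n) →ₗ[ℝ] EuclideanSpace ℝ (Fin n))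
    (ginv x : EuclideanSpace ℝ (Fin n) →ₗ[ℝ] EuclideanSpace ℝ (Fin n))
    (hsym x hx) h1 h2 q (hq x hx) (∑ μ, vLCont (bv n μ) (W' x (bv n μ))), neg_smul]
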